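/- (Equations of reflection.) Let ξ₀, ξ₁, η₀ ∈ ℂ and r₀ ∈ ℝ with (1 − ξ₀ξ̄₀)ξ̄₁ − 2ξ̄₀ ≠ 0, and let (z₀,t₀) = P(ξ₀,η₀,r₀). Define ξ₂ = (2ξ₀ξ̄₁ + 1 − ξ₀ξ̄₀)/((1 − ξ₀ξ̄₀)ξ̄₁ − 2ξ̄₀), η₁ = ((1 + ξ̄₀ξ₁)²η₀ − (ξ₀ − ξ₁)²η̄₀ + (ξ₀ − ξ₁)(1 + ξ̄₀ξ₁)(1 + ξ₀ξ̄₀)r₀)/(1 + ξ₀ξ̄₀)², and η₂ = ((ξ̄₀ − ξ̄₁)²η₀ − (1 + ξ₀ξ̄₁)²η̄₀ + (ξ̄₀ − ξ̄₁)(1 + ξ₀ξ̄₁)(1 + ξ₀ξ̄₀)r₀)/((1 − ξ₀ξ̄₀)ξ̄₁ − 2ξ̄₀)². Then η₁ = (1/2)(z₀ − 2t₀ξ₁ − z̄₀ξ₁²) and η₂ = (1/2)(z₀ − 2t₀ξ₂ − z̄₀ξ₂²); i.e. the incident line (ξ₁,η₁) and the reflected line (ξ₂,η₂) both pass through the surface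 point (z₀,t₀), and ξ₂ is the mirror-reflected direction. -/

import Mathlib

/-!
Both equations are instances of one identity: for every direction `ξ`, the line with
direction `ξ` through `P(ξ₀, η₀, r₀)` has twistor coordinate
`((1 + ξ̄₀ξ)² η₀ - (ξ₀ - ξ)² η̄₀ + (ξ₀ - ξ)(1 + ξ̄₀ξ)(1 + ξ₀ξ̄₀) r₀) / (1 + ξ₀ξ̄₀)²`.
Taking `ξ = ξ₁` gives `η₁`. For `ξ = ξ₂ = N / D`, the quotient defining `ξ₂`, the factors simplify to
`1 + ξ̄₀ξ₂ = (1 + ξ₀ξ̄₀)(ξ̄₁ - ξ̄₀) / D` and `ξ₀ - ξ₂ = -(1 + ξ₀ξ̄₀)(1 + ξ₀ξ̄₁) / D`,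
and the common factor `(1 + ξ₀ξ̄₀)²` cancels, leaving `η₂`.
-/

open ComplexConjugate

/-- The point of `ℝ³ = ℂ × ℝ` on the oriented line with twistor data `(ξ, η)`
at signed distance `r` from the point of the line closest to the origin. -/
noncomputable def twistorPoint (ξ η : ℂ) (r : ℝ) : ℂ × ℝ :=
  ((2 * (η - conj η * ξ ^ 2) + 2 * ξ * (1 + ξ * conj ξ) * (r : ℂ)) / (1 + ξ * conj ξ) ^ 2,
   (((-2 * (η * conj ξ + conj η * ξ) + (1 - ξ ^ 2 * (conj ξ) ^ 2) * (r : ℂ)) /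
      (1 + ξ * conj ξ) ^ 2).re))

/-- The twistor coordinate `η` of the oriented line with direction `ξ` through the point `p`. -/
noncomputable def twistorCoord (p : ℂ × ℝ) (ξ : ℂ) : ℂ :=
  (1 / 2) * (p.1 - 2 * (p.2 : ℂ) * ξ - conj p.1 * ξ ^ 2)

/-- The direction of the line obtained by reflecting direction `ξ₁` in the plane with unit
normal `ξ₀`, both given in the stereographic coordinate of the unit sphere. -/
noncomputable def reflectDir (ξ₀ ξ₁ : ℂ) : ℂ :=
  (2 * ξ₀ * conj ξ₁ + 1 - ξ₀ * conj ξ₀) / ((1 - ξ₀ * conj ξ₀) * conj ξ₁ - 2 * conj ξ₀)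

namespace Complex

lemma one_add_mul_conj_ne_zero (ξ : ℂ) : 1 + ξ * conj ξ ≠ 0 := by
  rw [mul_conj, ← ofReal_one, ← ofReal_add, ofReal_ne_zero]
  exact (add_pos_of_pos_of_nonneg one_pos (normSq_nonneg ξ)).ne'

end Complex

open Complex

lemma ofReal_twistorPoint_snd (ξ η : ℂ) (r : ℝ) :
    ((twistorPoint ξ η r).2 : ℂ) =
      (-2 * (η * conj ξ + conj η * ξ) + (1 - ξ ^ 2 * (conj ξ) ^ 2) * (r : ℂ)) /
        (1 + ξ * conj ξ) ^ 2 := by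
  refine conj_eq_iff_re.mp ?_
  simp only [map_div₀, map_add, map_mul, map_sub, map_neg, map_pow, map_one, map_ofNat,
    conj_conj, conj_ofReal]
  ring

lemma conj_twistorPoint_fst (ξ η : ℂ) (r : ℝ) :
    conj (twistorPoint ξ η r).1 =
      (2 * (conj η - η * (conj ξ) ^ 2) + 2 * conj ξ * (1 + ξ * conj ξ) * (r : ℂ)) /
        (1 + ξ * conj ξ) ^ 2 := by
  simp only [twistorPoint, map_div₀, map_add, map_mul, map_sub, map_pow, map_ofNat,
    map_one, conj_conj, conj_ofReal]
  ring

lemma twistorCoord_twistorPoint (ξ₀ η₀ : ℂ) (r₀ : ℝ) (ξ : ℂ) :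
    twistorCoord (twistorPoint ξ₀ η₀ r₀) ξ =
      ((1 + conj ξ₀ * ξ) ^ 2 * η₀ - (ξ₀ - ξ) ^ 2 * conj η₀ +
        (ξ₀ - ξ) * (1 + conj ξ₀ * ξ) * (1 + ξ₀ * conj ξ₀) * (r₀ : ℂ)) /
      (1 + ξ₀ * conj ξ₀) ^ 2 := by
  have hA := one_add_mul_conj_ne_zero ξ₀
  rw [twistorCoord, ofReal_twistorPoint_snd, conj_twistorPoint_fst, twistorPoint]
  field_simp
  ring

section reflectDir

variable {ξ₀ ξ₁ : ℂ} (hD : (1 - ξ₀ * conj ξ₀) * conj ξ₁ - 2 * conj ξ₀ ≠ 0)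
include hD

lemma one_add_conj_mul_reflectDir :
    1 + conj ξ₀ * reflectDir ξ₀ ξ₁ =
      (1 + ξ₀ * conj ξ₀) * (conj ξ₁ - conj ξ₀) /
        ((1 - ξ₀ * conj ξ₀) * conj ξ₁ - 2 * conj ξ₀) := by
  rw [reflectDir, mul_div_assoc', one_add_div hD, div_left_inj' hD]
  ring

lemma sub_reflectDir :
    ξ₀ - reflectDir ξ₀ ξ₁ =
      -((1 + ξ₀ * conj ξ₀) * (1 + ξ₀ * conj ξ₁)) /
        ((1 - ξ₀ * conj ξ₀) * conj ξ₁ - 2 * conj ξ₀) := by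
  rw [reflectDir, sub_div' hD, div_left_inj' hD]
  ring

end reflectDir

lemma twistorCoord_twistorPoint_reflectDir (ξ₀ ξ₁ η₀ : ℂ) (r₀ : ℝ)
    (hD : (1 - ξ₀ * conj ξ₀) * conj ξ₁ - 2 * conj ξ₀ ≠ 0) :
    twistorCoord (twistorPoint ξ₀ η₀ r₀) (reflectDir ξ₀ ξ₁) =
      ((conj ξ₀ - conj ξ₁) ^ 2 * η₀ - (1 + ξ₀ * conj ξ₁) ^ 2 * conj η₀ +
        (conj ξ₀ - conj ξ₁) * (1 + ξ₀ * conj ξ₁) * (1 + ξ₀ * conj ξ₀) * (r₀ : ℂ)) /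
      ((1 - ξ₀ * conj ξ₀) * conj ξ₁ - 2 * conj ξ₀) ^ 2 := by
  have hA := one_add_mul_conj_ne_zero ξ₀
  rw [twistorCoord_twistorPoint, one_add_conj_mul_reflectDir hD, sub_reflectDir hD]
  field_simp
  ring

theorem equations_of_reflection (ξ₀ ξ₁ η₀ : ℂ) (r₀ : ℝ)
    (hden : (1 - ξ₀ * conj ξ₀) * conj ξ₁ - 2 * conj ξ₀ ≠ 0)
    (z₀ : ℂ) (t₀ : ℝ) (h : (z₀, t₀) = twistorPoint ξ₀ η₀ r₀)
    (ξ₂ η₁ η₂ : ℂ)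
    (hξ₂ : ξ₂ = (2 * ξ₀ * conj ξ₁ + 1 - ξ₀ * conj ξ₀) /
      ((1 - ξ₀ * conj ξ₀) * conj ξ₁ - 2 * conj ξ₀))
    (hη₁ : η₁ = ((1 + conj ξ₀ * ξ₁) ^ 2 * η₀ - (ξ₀ - ξ₁) ^ 2 * conj η₀ +
        (ξ₀ - ξ₁) * (1 + conj ξ₀ * ξ₁) * (1 + ξ₀ * conj ξ₀) * (r₀ : ℂ)) /
      (1 + ξ₀ * conj ξ₀) ^ 2)
    (hη₂ : η₂ = ((conj ξ₀ - conj ξ₁) ^ 2 * η₀ - (1 + ξ₀ * conj ξ₁) ^ 2 * conj η₀ +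
        (conj ξ₀ - conj ξ₁) * (1 + ξ₀ * conj ξ₁) * (1 + ξ₀ * conj ξ₀) * (r₀ : ℂ)) /
      ((1 - ξ₀ * conj ξ₀) * conj ξ₁ - 2 * conj ξ₀) ^ 2) :
    η₁ = (1 / 2) * (z₀ - 2 * (t₀ : ℂ) * ξ₁ - conj z₀ * ξ₁ ^ 2) ∧
    η₂ = (1 / 2) * (z₀ - 2 * (t₀ : ℂ) * ξ₂ - conj z₀ * ξ₂ ^ 2) := by
  have hξ₂_eq : ξ₂ = reflectDir ξ₀ ξ₁ := hξ₂
  constructor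
  · rw [hη₁, ← twistorCoord_twistorPoint, ← h]
    rfl
  · rw [hη₂, ← twistorCoord_twistorPoint_reflectDir ξ₀ ξ₁ η₀ r₀ hden, ← h, ← hξ₂_eq]
    rfl
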